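/- arXiv:2202.00483 — 7 statements merged into one kernel-verified Lean document; each statement's English description precedes it below -/
import Mathlib

section
/- Let g(ζ) = Σ_{k=2}^∞ a_k ζ^k be holomorphic on 𝔻 with Σ_{k=2}^∞ (k−1)·|a_k| ≤ 3√3/2, and let f : 𝔹² → ℂ² be the shearing map f(z₁, z₂) = (z₁ + g(z₂), z₂). Then f is a starlike mapping of 𝔹², i.e., f ∈ S*(𝔹²). -/
open Metric Set Filter
open scoped InnerProductSpace

noncomputable section

/-- `f ∈ S(𝔹ⁿ)`: a normalized univalent holomorphic map of the Euclidean unit ball. -/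
def NormalizedUnivalent {n : ℕ} (f : EuclideanSpace ℂ (Fin n) → EuclideanSpace ℂ (Fin n)) :
    Prop :=
  DifferentiableOn ℂ f (ball 0 1) ∧ InjOn f (ball 0 1) ∧ f 0 = 0 ∧
    fderiv ℂ f 0 = ContinuousLinearMap.id ℂ (EuclideanSpace ℂ (Fin n))

/-- A Loewner chain `(f_t)_{t ≥ 0}` on the unit ball `𝔹ⁿ`. -/
def IsLoewnerChain {n : ℕ}
    (F : ℝ → EuclideanSpace ℂ (Fin n) → EuclideanSpace ℂ (Fin n)) : Prop :=
  (∀ t : ℝ, 0 ≤ t → NormalizedUnivalent (fun z => Real.exp (-t) • F t z)) ∧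
  (∀ s t : ℝ, 0 ≤ s → s ≤ t → F s '' ball 0 1 ⊆ F t '' ball 0 1)

/-- A normal Loewner chain: the family `{e^{-t} f_t}` is a normal family, i.e. every
sequence from the family admits a subsequence converging locally uniformly on `𝔹ⁿ`. -/
def IsNormalLoewnerChain {n : ℕ}
    (F : ℝ → EuclideanSpace ℂ (Fin n) → EuclideanSpace ℂ (Fin n)) : Prop :=
  IsLoewnerChain F ∧
  ∀ t : ℕ → ℝ, (∀ k, 0 ≤ t k) →
    ∃ (φ : ℕ → ℕ) (g : EuclideanSpace ℂ (Fin n) → EuclideanSpace ℂ (Fin n)),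
      StrictMono φ ∧
      TendstoLocallyUniformlyOn (fun k z => Real.exp (-(t (φ k))) • F (t (φ k)) z) g
        atTop (ball 0 1)

/-- `f ∈ S⁰(𝔹ⁿ)`: `f` is normalized univalent and embeds into a normal Loewner chain. -/
def MemS0 {n : ℕ} (f : EuclideanSpace ℂ (Fin n) → EuclideanSpace ℂ (Fin n)) : Prop :=
  NormalizedUnivalent f ∧
  ∃ F : ℝ → EuclideanSpace ℂ (Fin n) → EuclideanSpace ℂ (Fin n),
    IsNormalLoewnerChain F ∧ Set.EqOn (F 0) f (ball 0 1)

/-- A Runge domain in `ℂⁿ`: an open set on which every holomorphic function is a locally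
uniform limit of polynomial functions. -/
def IsRungeDomain {n : ℕ} (Ω : Set (EuclideanSpace ℂ (Fin n))) : Prop :=
  IsOpen Ω ∧ ∀ f : EuclideanSpace ℂ (Fin n) → ℂ, DifferentiableOn ℂ f Ω →
    ∃ p : ℕ → MvPolynomial (Fin n) ℂ,
      TendstoLocallyUniformlyOn (fun k z => MvPolynomial.eval (fun i => z i) (p k)) f atTop Ω

/-- A biholomorphic automorphism of `ℂⁿ`. -/
def IsAutomorphismCn {n : ℕ}
    (Φ : EuclideanSpace ℂ (Fin n) → EuclideanSpace ℂ (Fin n)) : Prop :=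
  Differentiable ℂ Φ ∧ ∃ Ψ, Differentiable ℂ Ψ ∧
    Function.LeftInverse Ψ Φ ∧ Function.RightInverse Ψ Φ

/-- `f ∈ S*(𝔹ⁿ)`: `f` is normalized univalent with image starlike w.r.t. the origin. -/
def MemSstar {n : ℕ} (f : EuclideanSpace ℂ (Fin n) → EuclideanSpace ℂ (Fin n)) : Prop :=
  NormalizedUnivalent f ∧
  ∀ w ∈ f '' ball 0 1, ∀ t : ℝ, t ∈ Icc (0:ℝ) 1 → t • w ∈ f '' ball 0 1

/-- The shearing map `(z₁, z₂) ↦ (z₁ + g(z₂), z₂)`. -/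
def shear (g : ℂ → ℂ) : EuclideanSpace ℂ (Fin 2) → EuclideanSpace ℂ (Fin 2) :=
  fun z => WithLp.toLp 2 ![z 0 + g (z 1), z 1]

/-- The map `(z₁, z₂) ↦ (z₁ - g(z₂), z₂)`, inverse of the shearing map. -/
def shearInv (g : ℂ → ℂ) : EuclideanSpace ℂ (Fin 2) → EuclideanSpace ℂ (Fin 2) :=
  fun z => WithLp.toLp 2 ![z 0 - g (z 1), z 1]



theorem corePoly (t x : ℝ) (ht0 : 0 ≤ t) (ht1 : t ≤ 1) (hx0 : 0 ≤ x) :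
    27*t^2*(1-t)*x^2 ≤ 4*(1-t)*(1+2*t) + t^2*((3*x-2)^2*(3*x+1)) := by
  have e1 : 0 ≤ t*(1-t)*(3-t) := by
    apply mul_nonneg (mul_nonneg ht0 (by linarith)) (by linarith)
  have h1 : 0 ≤ 4*(1-t)^2*(1+t*(1-t)*(3-t)) := by
    apply mul_nonneg (by positivity) (by linarith)
  have h2 : 0 ≤ t^2*(3*x-2*(2-t))^2*(3*x+2-t) := by
    apply mul_nonneg (by positivity) (by linarith)
  nlinarith [h1, h2]

theorem keyIneq (t s x : ℝ) (ht0 : 0 ≤ t) (ht1 : t ≤ 1) (hs : 0 ≤ s) (hx : 0 ≤ x)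
    (hsx : s^2 + x < 1) :
    (t*s + (3*Real.sqrt 3/2)*t*(1-t)*x)^2 + t^2*x < 1 := by
  set u := Real.sqrt 3 with hu_def
  have hu : u^2 = 3 := Real.sq_sqrt (by norm_num)
  have hu0 : 0 < u := Real.sqrt_pos.2 (by norm_num)
  have hx1 : x < 1 := by nlinarith [sq_nonneg s]
  rcases eq_or_lt_of_le ht0 with h | h
  · rw [← h]; norm_num
  · obtain ⟨b, hb_def⟩ : ∃ b : ℝ, b = (3*x-2)^2*(3*x+1) := ⟨_, rfl⟩
    have hb4 : b ≤ 4 := by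
      rw [hb_def]
      nlinarith [mul_nonneg (mul_nonneg hx hx) (sub_nonneg.2 hx1.le)]
    have ha : (3*u*s*x)^2 ≤ 4 - b := by
      rw [hb_def]
      nlinarith [mul_nonneg (mul_nonneg hx hx) (sub_nonneg.2 hsx.le), hu,
        mul_le_mul_of_nonneg_right (le_of_lt hsx) (mul_nonneg hx hx)]
    have ha0 : 0 ≤ 3*u*s*x := by positivity
    have hab : 3*u*s*x ≤ 2 - b/4 := by nlinarith [ha, sq_nonneg b]
    have hcp : 27*t^2*(1-t)*x^2 ≤ 4*(1-t)*(1+2*t) + t^2*b := by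
      rw [hb_def]; exact corePoly t x ht0 ht1 hx
    have hmul1 : 3*u*s*x * (t^2*(1-t)) ≤ (2 - b/4) * (t^2*(1-t)) :=
      mul_le_mul_of_nonneg_right hab (mul_nonneg (sq_nonneg t) (by linarith))
    have hmul2 : 27*t^2*(1-t)*x^2 * ((1-t)/4) ≤ (4*(1-t)*(1+2*t) + t^2*b) * ((1-t)/4) :=
      mul_le_mul_of_nonneg_right hcp (by linarith)
    have h5 : t^2*(s^2+x) < t^2*1 := by
      apply mul_lt_mul_of_pos_left hsx (by positivity)
    have expand : (t*s + (3*u/2)*t*(1-t)*x)^2 + t^2*x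
        = t^2*(s^2+x) + (3*u*s*x)*(t^2*(1-t)) + 27*t^2*(1-t)*x^2*((1-t)/4) := by
      linear_combination (9/4*(t^2*(1-t)^2*x^2)) * hu
    rw [expand]
    linarith [hmul1, hmul2, h5]

theorem one_sub_pow_le (t : ℝ) (ht0 : 0 ≤ t) (ht1 : t ≤ 1) : ∀ n : ℕ, 1 - t^n ≤ n*(1-t) := by
  intro n
  induction n with
  | zero => simp
  | succ n ih =>
    have h1 : t^n ≤ 1 := pow_le_one₀ ht0 ht1
    have h2 := mul_le_mul_of_nonneg_left ih ht0
    have h3 : (0:ℝ) ≤ (n:ℝ)*(1-t) := mul_nonneg (Nat.cast_nonneg n) (by linarith)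
    rw [pow_succ]
    push_cast
    nlinarith [h2, h3, mul_le_mul_of_nonneg_right ht1 h3]

/- power series of g -/
theorem gPowerSeries (a : ℕ → ℂ) (g : ℂ → ℂ) (ha0 : a 0 = 0) (ha1 : a 1 = 0)
    (hg : ∀ ζ ∈ ball (0:ℂ) 1, HasSum (fun k : ℕ => a k * ζ ^ k) (g ζ))
    (hsum : Summable fun k : ℕ => ((k : ℝ) - 1) * ‖a k‖) :
    HasFPowerSeriesOnBall g (FormalMultilinearSeries.ofScalars ℂ a) 0 1 := by
  have hsa : Summable fun k => ‖a k‖ := by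
    apply Summable.of_nonneg_of_le (fun k => norm_nonneg _) _ hsum
    intro k
    match k with
    | 0 => simp [ha0]
    | 1 => simp [ha1]
    | (n+2) =>
      have h1 : (1:ℝ) ≤ ((n+2:ℕ):ℝ) - 1 := by push_cast; linarith
      nlinarith [norm_nonneg (a (n+2))]
  have hr : 1 ≤ (FormalMultilinearSeries.ofScalars ℂ a).radius := by
    have := FormalMultilinearSeries.le_radius_of_bound (FormalMultilinearSeries.ofScalars ℂ a)
      (∑' k, ‖a k‖) (r := 1) (fun n => by
        simp only [NNReal.coe_one, one_pow, mul_one]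
        calc ‖FormalMultilinearSeries.ofScalars ℂ a n‖ = ‖a n‖ :=
              by rw [FormalMultilinearSeries.ofScalars_norm]
          _ ≤ ∑' k, ‖a k‖ := hsa.le_tsum n (fun _ _ => norm_nonneg _))
    simpa using this
  refine ⟨hr, one_pos, ?_⟩
  intro y hy
  have hy' : y ∈ ball (0:ℂ) 1 := by
    have hcoe : (1:ENNReal) = ((1:NNReal):ENNReal) := by simp
    rw [hcoe, Metric.emetric_ball_nnreal] at hy
    simpa using hy
  have h0y : (0:ℂ) + y = y := zero_add y
  rw [h0y]
  apply (hg y hy').congr_fun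
  intro n
  rw [FormalMultilinearSeries.ofScalars_apply_eq, smul_eq_mul]

/- the crucial tsum estimate -/
theorem shiftBound (a : ℕ → ℂ) (g : ℂ → ℂ) (ha0 : a 0 = 0) (ha1 : a 1 = 0)
    (hg : ∀ ζ ∈ ball (0:ℂ) 1, HasSum (fun k : ℕ => a k * ζ ^ k) (g ζ))
    (hsum : Summable fun k : ℕ => ((k : ℝ) - 1) * ‖a k‖)
    (t : ℝ) (ht0 : 0 ≤ t) (ht1 : t ≤ 1) (ζ : ℂ) (hζ : ‖ζ‖ < 1) :
    ‖(t:ℂ) * g ζ - g ((t:ℂ)*ζ)‖ ≤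
      (∑' k : ℕ, ((k : ℝ) - 1) * ‖a k‖) * (t*(1-t)*‖ζ‖^2) := by
  have hζm : ζ ∈ ball (0:ℂ) 1 := mem_ball_zero_iff.2 hζ
  have hζ0 : 0 ≤ ‖ζ‖ := norm_nonneg _
  have htζ : (t:ℂ)*ζ ∈ ball (0:ℂ) 1 := by
    rw [mem_ball_zero_iff, norm_mul, Complex.norm_real, Real.norm_of_nonneg ht0]
    calc t * ‖ζ‖ ≤ 1 * ‖ζ‖ := mul_le_mul_of_nonneg_right ht1 hζ0
      _ = ‖ζ‖ := one_mul _
      _ < 1 := hζ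
  have h1 : HasSum (fun k : ℕ => (t:ℂ)*(a k * ζ^k)) ((t:ℂ) * g ζ) := (hg ζ hζm).mul_left _
  have h2 : HasSum (fun k : ℕ => a k * ((t:ℂ)*ζ)^k) (g ((t:ℂ)*ζ)) := hg _ htζ
  have h3 : HasSum (fun k : ℕ => (t:ℂ)*(a k * ζ^k) - a k * ((t:ℂ)*ζ)^k)
      ((t:ℂ) * g ζ - g ((t:ℂ)*ζ)) := h1.sub h2
  -- termwise bound
  have hterm : ∀ k : ℕ, ‖(t:ℂ)*(a k * ζ^k) - a k * ((t:ℂ)*ζ)^k‖ ≤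
      ((k : ℝ) - 1) * ‖a k‖ * (t*(1-t)*‖ζ‖^2) := by
    intro k
    match k with
    | 0 => simp [ha0]
    | 1 => simp [ha1]
    | (n+2) =>
      have heq : (t:ℂ)*(a (n+2) * ζ^(n+2)) - a (n+2) * ((t:ℂ)*ζ)^(n+2)
          = a (n+2) * ζ^(n+2) * ((t:ℂ) - (t:ℂ)^(n+2)) := by ring
      rw [heq, norm_mul, norm_mul, norm_pow]
      have hcast : (t:ℂ) - (t:ℂ)^(n+2) = ((t - t^(n+2) : ℝ) : ℂ) := by push_cast; ring
      rw [hcast, Complex.norm_real]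
      have htk : t^(n+2) ≤ t := pow_le_of_le_one ht0 ht1 (by omega)
      rw [Real.norm_of_nonneg (by linarith)]
      have hb1 : t - t^(n+2) ≤ ((n+1:ℕ):ℝ) * (t*(1-t)) := by
        have := mul_le_mul_of_nonneg_left (one_sub_pow_le t ht0 ht1 (n+1)) ht0
        calc t - t^(n+2) = t * (1 - t^(n+1)) := by ring
          _ ≤ t * (((n+1:ℕ):ℝ)*(1-t)) := this
          _ = ((n+1:ℕ):ℝ) * (t*(1-t)) := by ring
      have hb2 : ‖ζ‖^(n+2) ≤ ‖ζ‖^2 := pow_le_pow_of_le_one hζ0 hζ.le (by omega)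
      have hbig : ‖a (n+2)‖ * ‖ζ‖^(n+2) * (t - t^(n+2)) ≤
          (‖a (n+2)‖ * ‖ζ‖^2) * (((n+1:ℕ):ℝ) * (t*(1-t))) := by
        apply mul_le_mul (mul_le_mul_of_nonneg_left hb2 (norm_nonneg _)) hb1
          (by linarith) (by positivity)
      calc ‖a (n+2)‖ * ‖ζ‖^(n+2) * (t - t^(n+2))
          ≤ (‖a (n+2)‖ * ‖ζ‖^2) * (((n+1:ℕ):ℝ) * (t*(1-t))) := hbig
        _ = (((n+2:ℕ):ℝ) - 1) * ‖a (n+2)‖ * (t*(1-t)*‖ζ‖^2) := by push_cast; ring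
  have hsummR : Summable (fun k : ℕ => ((k : ℝ) - 1) * ‖a k‖ * (t*(1-t)*‖ζ‖^2)) :=
    hsum.mul_right _
  have hsummN : Summable (fun k : ℕ => ‖(t:ℂ)*(a k * ζ^k) - a k * ((t:ℂ)*ζ)^k‖) :=
    Summable.of_nonneg_of_le (fun k => norm_nonneg _) hterm hsummR
  calc ‖(t:ℂ) * g ζ - g ((t:ℂ)*ζ)‖ = ‖∑' k, ((t:ℂ)*(a k * ζ^k) - a k * ((t:ℂ)*ζ)^k)‖ := by
        rw [h3.tsum_eq]
    _ ≤ ∑' k, ‖(t:ℂ)*(a k * ζ^k) - a k * ((t:ℂ)*ζ)^k‖ := norm_tsum_le_tsum_norm hsummN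
    _ ≤ ∑' k : ℕ, ((k : ℝ) - 1) * ‖a k‖ * (t*(1-t)*‖ζ‖^2) := Summable.tsum_le_tsum hterm hsummN hsummR
    _ = (∑' k : ℕ, ((k : ℝ) - 1) * ‖a k‖) * (t*(1-t)*‖ζ‖^2) := tsum_mul_right

theorem mem_ball_iff2 (z : EuclideanSpace ℂ (Fin 2)) :
    z ∈ ball (0:EuclideanSpace ℂ (Fin 2)) 1 ↔ ‖z 0‖^2 + ‖z 1‖^2 < 1 := by
  rw [mem_ball_zero_iff, EuclideanSpace.norm_eq, Fin.sum_univ_two,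
    Real.sqrt_lt' one_pos, one_pow]

/-- If `g(ζ) = Σ_{k≥2} a_k ζ^k` on `𝔻` with `Σ (k-1)|a_k| ≤ 3√3/2`, then the shearing map
is a starlike mapping of `𝔹²`. -/
theorem statement7 (a : ℕ → ℂ) (g : ℂ → ℂ) (ha0 : a 0 = 0) (ha1 : a 1 = 0)
    (hg : ∀ ζ ∈ ball (0:ℂ) 1, HasSum (fun k : ℕ => a k * ζ ^ k) (g ζ))
    (hsum : Summable fun k : ℕ => ((k : ℝ) - 1) * ‖a k‖)
    (hb : ∑' k : ℕ, ((k : ℝ) - 1) * ‖a k‖ ≤ 3 * Real.sqrt 3 / 2) :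
    MemSstar (shear g) := by
  have hps := gPowerSeries a g ha0 ha1 hg hsum
  -- g vanishes at 0
  have hg0 : g 0 = 0 := by
    have h := hg 0 (mem_ball_self one_pos)
    have heq : (fun k : ℕ => a k * (0:ℂ) ^ k) = fun _ => 0 := by
      funext k
      match k with
      | 0 => simp [ha0]
      | (n+1) => simp
    rw [heq] at h
    exact (hasSum_zero.unique h).symm
  -- derivative of g at 0 is 0
  have hgd : HasDerivAt g 0 0 := by
    have h := hps.hasFPowerSeriesAt.hasDerivAt
    have hc : (FormalMultilinearSeries.ofScalars ℂ a 1) (fun _ => (1:ℂ)) = 0 := by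
      rw [FormalMultilinearSeries.ofScalars_apply_eq]
      simp [ha1]
    rwa [hc] at h
  -- g is analytic hence differentiable on the unit disc
  have hgdiff : ∀ ζ : ℂ, ‖ζ‖ < 1 → DifferentiableAt ℂ g ζ := by
    intro ζ hζ
    have : ζ ∈ Metric.eball (0:ℂ) 1 := by
      have hcoe : (1:ENNReal) = ((1:NNReal):ENNReal) := by simp
      rw [hcoe, Metric.emetric_ball_nnreal]
      simpa using hζ
    exact (hps.analyticAt_of_mem this).differentiableAt
  -- rewrite shear
  have shear_eq : shear g = fun z : EuclideanSpace ℂ (Fin 2) =>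
      z + g (z 1) • (EuclideanSpace.single (0 : Fin 2) (1:ℂ)) := by
    funext z
    ext i
    fin_cases i <;>
      simp [shear, EuclideanSpace.single_apply, PiLp.add_apply, PiLp.smul_apply]
  -- norm of component ≤ norm of vector fact
  have hcomp : ∀ z : EuclideanSpace ℂ (Fin 2), z ∈ ball (0:EuclideanSpace ℂ (Fin 2)) 1 →
      ‖z 1‖ < 1 := by
    intro z hz
    have := (mem_ball_iff2 z).1 hz
    nlinarith [sq_nonneg ‖z 0‖, norm_nonneg (z 1), norm_nonneg (z 1)]
  constructor
  · refine ⟨?_, ?_, ?_, ?_⟩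
    · -- differentiable on ball
      intro z hz
      have h1 : DifferentiableAt ℂ (fun z : EuclideanSpace ℂ (Fin 2) => g (z 1)) z := by
        have hp : DifferentiableAt ℂ (fun z : EuclideanSpace ℂ (Fin 2) => z 1) z := by
          have h := (EuclideanSpace.proj (1 : Fin 2) :
            EuclideanSpace ℂ (Fin 2) →L[ℂ] ℂ).differentiableAt (x := z)
          exact h
        exact (hgdiff (z 1) (hcomp z hz)).comp z hp
      rw [shear_eq]
      exact (differentiableAt_id.add (h1.smul_const _)).differentiableWithinAt
    · -- injective
      intro z _ w _ h
      have h1 : z 1 = w 1 := congrArg (fun v => v 1) h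
      have h0 : z 0 + g (z 1) = w 0 + g (w 1) := congrArg (fun v => v 0) h
      rw [h1] at h0
      have h0' : z 0 = w 0 := by
        have := add_right_cancel h0
        exact this
      ext i
      fin_cases i
      · exact h0'
      · exact h1
    · -- f 0 = 0
      ext i
      fin_cases i <;> simp [shear, hg0]
    · -- fderiv at 0 = id
      have h1 : HasFDerivAt (fun z : EuclideanSpace ℂ (Fin 2) => g (z 1))
          (0 : EuclideanSpace ℂ (Fin 2) →L[ℂ] ℂ) 0 := by
        have hproj : HasFDerivAt (fun z : EuclideanSpace ℂ (Fin 2) => z 1)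
            (EuclideanSpace.proj (1 : Fin 2) : EuclideanSpace ℂ (Fin 2) →L[ℂ] ℂ) 0 := by
          have h := (EuclideanSpace.proj (1 : Fin 2) :
            EuclideanSpace ℂ (Fin 2) →L[ℂ] ℂ).hasFDerivAt (x := (0 : EuclideanSpace ℂ (Fin 2)))
          exact h
        have h := hgd.comp_hasFDerivAt (0:EuclideanSpace ℂ (Fin 2)) hproj
        exact h.congr_fderiv (by ext v; simp)
      have h2 : HasFDerivAt (shear g) (ContinuousLinearMap.id ℂ (EuclideanSpace ℂ (Fin 2))) 0 := by
        rw [shear_eq]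
        have h3 := (hasFDerivAt_id (0 : EuclideanSpace ℂ (Fin 2))).add
          (h1.smul_const (EuclideanSpace.single (0 : Fin 2) (1:ℂ)))
        have h4 : (0 : EuclideanSpace ℂ (Fin 2) →L[ℂ] ℂ).smulRight
            (EuclideanSpace.single (0 : Fin 2) (1:ℂ)) = 0 := by
          ext v
          simp
        rw [h4, add_zero] at h3
        exact h3
      exact h2.fderiv
  · -- starlike
    rintro w ⟨z, hz, rfl⟩ t ⟨ht0, ht1⟩
    have hz1 : ‖z 1‖ < 1 := hcomp z hz
    have hsx : ‖z 0‖^2 + ‖z 1‖^2 < 1 := (mem_ball_iff2 z).1 hz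
    set z' : EuclideanSpace ℂ (Fin 2) :=
      WithLp.toLp 2 ![(t:ℂ) * z 0 + ((t:ℂ) * g (z 1) - g ((t:ℂ) * z 1)), (t:ℂ) * z 1] with hz'def
    refine ⟨z', ?_, ?_⟩
    · -- z' in ball
      rw [mem_ball_iff2]
      have e0 : z' 0 = (t:ℂ) * z 0 + ((t:ℂ) * g (z 1) - g ((t:ℂ) * z 1)) := rfl
      have e1 : z' 1 = (t:ℂ) * z 1 := rfl
      have hn1 : ‖z' 1‖^2 = t^2 * ‖z 1‖^2 := by
        rw [e1, norm_mul, Complex.norm_real, Real.norm_of_nonneg ht0]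
        ring
      have hbound := shiftBound a g ha0 ha1 hg hsum t ht0 ht1 (z 1) hz1
      have hC : (∑' k : ℕ, ((k : ℝ) - 1) * ‖a k‖) * (t*(1-t)*‖z 1‖^2)
          ≤ (3 * Real.sqrt 3 / 2) * (t*(1-t)*‖z 1‖^2) := by
        apply mul_le_mul_of_nonneg_right hb
        have : 0 ≤ 1 - t := by linarith
        positivity
      have hn0 : ‖z' 0‖ ≤ t*‖z 0‖ + (3 * Real.sqrt 3/2)*t*(1-t)*‖z 1‖^2 := by
        rw [e0]
        calc ‖(t:ℂ) * z 0 + ((t:ℂ) * g (z 1) - g ((t:ℂ) * z 1))‖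
            ≤ ‖(t:ℂ) * z 0‖ + ‖(t:ℂ) * g (z 1) - g ((t:ℂ) * z 1)‖ := norm_add_le _ _
          _ ≤ t*‖z 0‖ + (3 * Real.sqrt 3/2)*t*(1-t)*‖z 1‖^2 := by
              rw [norm_mul, Complex.norm_real, Real.norm_of_nonneg ht0]
              have := le_trans hbound hC
              calc t * ‖z 0‖ + ‖(t:ℂ) * g (z 1) - g ((t:ℂ) * z 1)‖
                  ≤ t * ‖z 0‖ + (3 * Real.sqrt 3 / 2) * (t*(1-t)*‖z 1‖^2) := by linarith
                _ = t*‖z 0‖ + (3 * Real.sqrt 3/2)*t*(1-t)*‖z 1‖^2 := by ring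
      have hkey := keyIneq t ‖z 0‖ (‖z 1‖^2) ht0 ht1 (norm_nonneg _) (by positivity) hsx
      have hsq : ‖z' 0‖^2 ≤ (t*‖z 0‖ + (3 * Real.sqrt 3/2)*t*(1-t)*‖z 1‖^2)^2 := by
        apply pow_le_pow_left₀ (norm_nonneg _) hn0
      calc ‖z' 0‖^2 + ‖z' 1‖^2
          ≤ (t*‖z 0‖ + (3 * Real.sqrt 3/2)*t*(1-t)*‖z 1‖^2)^2 + t^2*‖z 1‖^2 := by
            rw [hn1]; linarith
        _ < 1 := hkey
    · -- shear g z' = t • shear g z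
      ext i
      fin_cases i
      · show z' 0 + g (z' 1) = (t • shear g z) 0
        have e0 : z' 0 = (t:ℂ) * z 0 + ((t:ℂ) * g (z 1) - g ((t:ℂ) * z 1)) := rfl
        have e1 : z' 1 = (t:ℂ) * z 1 := rfl
        have e2 : (t • shear g z) 0 = (t:ℂ) * (z 0 + g (z 1)) := by
          simp [shear, PiLp.smul_apply, Complex.real_smul]
          ring
        rw [e0, e1, e2]
        ring
      · show z' 1 = (t • shear g z) 1
        have e1 : z' 1 = (t:ℂ) * z 1 := rfl
        have e2 : (t • shear g z) 1 = (t:ℂ) * z 1 := by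
          simp [shear, PiLp.smul_apply, Complex.real_smul]
        rw [e1, e2]
end
end

section
/- Let a ∈ ℂ with |a| > 3√3/2 and let f_a : 𝔹² → ℂ² be defined by f_a(z₁, z₂) = (z₁ + a·z₂², z₂). Then f_a does not belong to S*(𝔹²), i.e., the image f_a(𝔹²) is not starlike with respect to the origin. Consequently, the constant 3√3/2 in the criterion 'Σ_{k=2}^∞ (k−1)|a_k| ≤ 3√3/2 implies the shearing map is starlike' is sharp. -/
open Metric Set Filter
open scoped InnerProductSpace

noncomputable section

set_option maxHeartbeats 1000000 in
lemma key8aux (q μ ν ε r : ℝ) (hq2 : q ^ 2 = 3) (hq0 : 0 < q) (hμ : 0 < μ)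
    (hν0 : 0 < ν) (hν1 : ν ≤ 1) (hνμ : ν ≤ μ) (hε : ε = ν / 8) (hr : r = 1 - ν ^ 2 / 64) :
    1 ≤ ((1 - ε) * (r * q / 3) + (1 - ε) * (1 - (1 - ε)) * (3 * q * (1 + μ) / 2)
        * (2 * r ^ 2 / 3)) ^ 2 + (1 - ε) ^ 2 * (2 * r ^ 2 / 3) := by
  have hν2 : ν ^ 2 ≤ 1 := by nlinarith
  have hν3 : 0 ≤ ν ^ 3 := by positivity
  have hν43 : ν ^ 4 ≤ ν ^ 3 := by nlinarith
  have hr0 : 0 < r := by rw [hr]; nlinarith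
  have hr1 : r < 1 := by rw [hr]; nlinarith
  have hE : ((1 - ε) * (r * q / 3) + (1 - ε) * (1 - (1 - ε)) * (3 * q * (1 + μ) / 2)
        * (2 * r ^ 2 / 3)) ^ 2 + (1 - ε) ^ 2 * (2 * r ^ 2 / 3)
      = (1 - ε) ^ 2 * (r ^ 2 + 2 * (1 + μ) * ε * r ^ 3 + 3 * ε ^ 2 * (1 + μ) ^ 2 * r ^ 4) := by
    linear_combination ((1 - ε) ^ 2 * (r / 3 + ε * (1 + μ) * r ^ 2) ^ 2) * hq2
  rw [hE]
  have hr3 : 1 - 3 * ν ^ 2 / 64 ≤ r ^ 3 := by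
    rw [hr]
    nlinarith [sq_nonneg (ν ^ 2 / 64), hν2]
  have hr2 : r ^ 3 ≤ r ^ 2 := by nlinarith
  have hεpos : 0 < ε := by rw [hε]; linarith
  have hε1 : ε ≤ 1 / 8 := by rw [hε]; linarith
  have h1 : 1 ≤ (1 - ε) ^ 2 * (r ^ 2 + 2 * (1 + ν) * ε * r ^ 3) := by
    have hQ : 0 ≤ 5/32 - 15/256 * ν - 23/4096 * ν ^ 2 + 45/16384 * ν ^ 3 - 3/16384 * ν ^ 4 := by
      nlinarith
    have hkey : 1 ≤ (1 - ν/8) ^ 2 * ((1 - 3 * ν ^ 2 / 64) + 2 * (1 + ν) * (ν/8) * (1 - 3 * ν ^ 2 / 64)) := by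
      nlinarith [mul_nonneg (sq_nonneg ν) hQ]
    calc (1:ℝ) ≤ (1 - ν/8) ^ 2 * ((1 - 3 * ν ^ 2 / 64) + 2 * (1 + ν) * (ν/8) * (1 - 3 * ν ^ 2 / 64)) := hkey
      _ ≤ (1 - ε) ^ 2 * (r ^ 2 + 2 * (1 + ν) * ε * r ^ 3) := by
          rw [hε]
          have hrR : 1 - 3 * ν ^ 2 / 64 ≤ r ^ 2 := le_trans hr3 hr2
          have hnn : 0 ≤ (1 - ν/8) ^ 2 := sq_nonneg _
          have h5 : 2 * (1 + ν) * (ν/8) * (1 - 3 * ν ^ 2 / 64) ≤ 2 * (1 + ν) * (ν/8) * r ^ 3 := by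
            have h7 : 0 ≤ 2 * (1 + ν) * (ν/8) := by positivity
            exact mul_le_mul_of_nonneg_left hr3 h7
          have := mul_le_mul_of_nonneg_left (add_le_add hrR h5) hnn
          linarith
  have hμν : 2 * (1 + ν) * ε * r ^ 3 ≤ 2 * (1 + μ) * ε * r ^ 3 := by
    have h6 : (0:ℝ) ≤ 2 * ε * r ^ 3 := by positivity
    nlinarith
  nlinarith [mul_nonneg (sq_nonneg (1-ε)) (by positivity : (0:ℝ) ≤ 3 * ε ^ 2 * (1 + μ) ^ 2 * r ^ 4),
    mul_le_mul_of_nonneg_left hμν (sq_nonneg (1-ε))]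

lemma key8 (A : ℝ) (hA : 3 * Real.sqrt 3 / 2 < A) :
    ∃ c s t : ℝ, 0 ≤ c ∧ 0 ≤ s ∧ c ^ 2 + s ^ 2 < 1 ∧ 0 ≤ t ∧ t ≤ 1 ∧
      1 ≤ (t * c + t * (1 - t) * A * s ^ 2) ^ 2 + (t * s) ^ 2 := by
  obtain ⟨q, hq2, hq0, hA'⟩ : ∃ q : ℝ, q ^ 2 = 3 ∧ 0 < q ∧ 3 * q / 2 < A :=
    ⟨Real.sqrt 3, Real.sq_sqrt (by norm_num), Real.sqrt_pos.mpr (by norm_num), hA⟩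
  obtain ⟨w, hw2, hw0⟩ : ∃ w : ℝ, w ^ 2 = 2 ∧ 0 < w :=
    ⟨Real.sqrt 2, Real.sq_sqrt (by norm_num), Real.sqrt_pos.mpr (by norm_num)⟩
  obtain ⟨μ, hμ, hAq⟩ : ∃ μ : ℝ, 0 < μ ∧ A = 3 * q * (1 + μ) / 2 := by
    refine ⟨2 * A / (3 * q) - 1, ?_, ?_⟩
    · rw [sub_pos, lt_div_iff₀ (by positivity)]; nlinarith
    · field_simp; ring
  obtain ⟨ν, hν0, hν1, hνμ⟩ : ∃ ν : ℝ, 0 < ν ∧ ν ≤ 1 ∧ ν ≤ μ :=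
    ⟨min μ 1, lt_min hμ one_pos, min_le_right _ _, min_le_left _ _⟩
  obtain ⟨ε, hεdef⟩ : ∃ ε : ℝ, ε = ν / 8 := ⟨_, rfl⟩
  obtain ⟨r, hrdef⟩ : ∃ r : ℝ, r = 1 - ν ^ 2 / 64 := ⟨_, rfl⟩
  have hr0 : 0 < r := by rw [hrdef]; nlinarith
  have hr1 : r < 1 := by rw [hrdef]; nlinarith
  have hs2 : (r * q * w / 3) ^ 2 = 2 * r ^ 2 / 3 := by
    have h : (r * q * w / 3) ^ 2 = r ^ 2 * q ^ 2 * w ^ 2 / 9 := by ring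
    rw [h, hq2, hw2]; ring
  refine ⟨r * q / 3, r * q * w / 3, 1 - ε, by positivity, by positivity, ?_, ?_, ?_, ?_⟩
  · rw [hs2]
    have hc2 : (r * q / 3) ^ 2 = r ^ 2 / 3 := by
      have h : (r * q / 3) ^ 2 = r ^ 2 * q ^ 2 / 9 := by ring
      rw [h, hq2]; ring
    rw [hc2]
    nlinarith [mul_pos (sub_pos.mpr hr1) (by linarith : (0:ℝ) < 1 + r)]
  · rw [hεdef]; nlinarith
  · rw [hεdef]; nlinarith
  · rw [mul_pow (1 - ε) (r * q * w / 3), hs2, hAq]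
    exact key8aux q μ ν ε r hq2 hq0 hμ hν0 hν1 hνμ hεdef hrdef

/-- For `|a| > 3√3/2` the shearing map `(z₁,z₂) ↦ (z₁ + a z₂², z₂)` has image that is not
starlike with respect to the origin; hence the constant `3√3/2` is sharp. -/
theorem statement8 (a : ℂ) (ha : 3 * Real.sqrt 3 / 2 < ‖a‖) :
    ¬ ∀ w ∈ shear (fun ζ => a * ζ ^ 2) '' ball 0 1, ∀ t : ℝ, t ∈ Icc (0:ℝ) 1 →
        t • w ∈ shear (fun ζ => a * ζ ^ 2) '' ball 0 1 := by
  intro h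
  set g : ℂ → ℂ := fun ζ => a * ζ ^ 2 with hg
  have ha0 : a ≠ 0 := by
    intro h0
    rw [h0, norm_zero] at ha
    nlinarith [Real.sqrt_nonneg 3]
  obtain ⟨c, s, t, hc, hs, hcs, ht0, ht1, hmain⟩ := key8 ‖a‖ ha
  obtain ⟨u, hu⟩ : ∃ u : ℂ, u ^ 2 = (‖a‖ : ℂ) / a :=
    IsAlgClosed.exists_pow_nat_eq ((‖a‖ : ℂ) / a) (n := 2) (by norm_num)
  have hau : a * u ^ 2 = (‖a‖ : ℂ) := by rw [hu]; field_simp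
  have ha' : 0 < ‖a‖ := norm_pos_iff.mpr ha0
  have hu1 : ‖u‖ = 1 := by
    have h1 : ‖a‖ * ‖u‖ ^ 2 = ‖a‖ := by
      have h2 := congrArg norm hau
      rwa [norm_mul, norm_pow, Complex.norm_real, Real.norm_eq_abs,
        abs_of_nonneg (norm_nonneg a)] at h2
    have h3 : ‖u‖ ^ 2 = 1 := by
      have := mul_left_cancel₀ ha'.ne' (by linarith [h1] : ‖a‖ * ‖u‖ ^ 2 = ‖a‖ * 1)
      exact this
    nlinarith [norm_nonneg u]
  set z : EuclideanSpace ℂ (Fin 2) := WithLp.toLp 2 ![(c:ℂ), (s:ℂ) * u] with hzdef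
  have hz0 : z 0 = (c:ℂ) := rfl
  have hz1 : z 1 = (s:ℂ) * u := rfl
  have hzb : z ∈ ball (0 : EuclideanSpace ℂ (Fin 2)) 1 := by
    rw [mem_ball_zero_iff, EuclideanSpace.norm_eq]
    have hsum : ∑ i, ‖z i‖ ^ 2 = c ^ 2 + s ^ 2 := by
      rw [Fin.sum_univ_two, hz0, hz1, norm_mul, hu1, Complex.norm_real, Complex.norm_real,
        Real.norm_eq_abs, Real.norm_eq_abs, abs_of_nonneg hc, abs_of_nonneg hs]
      ring
    rw [hsum, show (1:ℝ) = Real.sqrt 1 from (Real.sqrt_one).symm]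
    exact Real.sqrt_lt_sqrt (by positivity) (by simpa using hcs)
  have hmem := h (shear g z) ⟨z, hzb, rfl⟩ t ⟨ht0, ht1⟩
  obtain ⟨z', hz'b, hz'eq⟩ := hmem
  have hinv : ∀ v : EuclideanSpace ℂ (Fin 2), shearInv g (shear g v) = v := by
    intro v
    ext i
    fin_cases i <;> simp [shear, shearInv]
  have hz'val : z' = shearInv g (t • shear g z) := by rw [← hz'eq, hinv]
  have hvec : shearInv g (t • shear g z)
      = WithLp.toLp 2 ![((t * c + t * (1 - t) * ‖a‖ * s ^ 2 : ℝ) : ℂ), ((t * s : ℝ) : ℂ) * u] := by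
    ext i
    fin_cases i
    · simp only [shearInv, shear, PiLp.smul_apply, Complex.real_smul]
      simp [hz0, hz1, hg]
      push_cast
      linear_combination ((t : ℂ) * (s : ℂ) ^ 2 - (t : ℂ) ^ 2 * (s : ℂ) ^ 2) * hau
    · simp only [shearInv, shear, PiLp.smul_apply, Complex.real_smul]
      simp [hz1]
      push_cast
      ring
  have hge : (1:ℝ) ≤ ‖shearInv g (t • shear g z)‖ := by
    rw [hvec, EuclideanSpace.norm_eq]
    have hnn : 0 ≤ t * c + t * (1 - t) * ‖a‖ * s ^ 2 :=
      add_nonneg (mul_nonneg ht0 hc)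
        (mul_nonneg (mul_nonneg (mul_nonneg ht0 (by linarith)) (norm_nonneg a)) (sq_nonneg s))
    have hsum : ∑ i, ‖(WithLp.toLp 2 ![((t * c + t * (1 - t) * ‖a‖ * s ^ 2 : ℝ) : ℂ),
        ((t * s : ℝ) : ℂ) * u] : EuclideanSpace ℂ (Fin 2)) i‖ ^ 2
        = (t * c + t * (1 - t) * ‖a‖ * s ^ 2) ^ 2 + (t * s) ^ 2 := by
      rw [Fin.sum_univ_two]
      simp only [PiLp.toLp_apply, Matrix.cons_val_zero, Matrix.cons_val_one, Matrix.head_cons, norm_mul, hu1,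
        Complex.norm_real, Real.norm_eq_abs, abs_of_nonneg hnn, abs_mul,
        abs_of_nonneg ht0, abs_of_nonneg hs]
      ring
    rw [hsum, show (1:ℝ) = Real.sqrt 1 from (Real.sqrt_one).symm]
    exact Real.sqrt_le_sqrt (by simpa using hmain)
  rw [← hz'val] at hge
  rw [mem_ball_zero_iff] at hz'b
  linarith
end
end

section
/- Let g : 𝔻 → ℂ be holomorphic with g(0) = g′(0) = 0 and let f : 𝔹² → ℂ² be the shearing map f(z₁, z₂) = (z₁ + g(z₂), z₂). If f ∈ S*(𝔹²) (i.e., f(𝔹²) is starlike with respect to the origin), then for every α ∈ (0,1] and every z = (z₁, z₂) ∈ 𝔹², one has |z₁ + g(z₂) − (1/α)·g(α z₂)|² + |z₂|² < 1/α². -/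
open Metric Set Filter
open scoped InnerProductSpace

noncomputable section

/-- If the shearing map of `g` is starlike, then for every `α ∈ (0,1]` and `z ∈ 𝔹²`,
`|z₁ + g(z₂) - α⁻¹ g(α z₂)|² + |z₂|² < α⁻²`. -/
theorem statement9 (g : ℂ → ℂ) (hg : DifferentiableOn ℂ g (ball 0 1))
    (hg0 : g 0 = 0) (hg0' : deriv g 0 = 0) (hstar : MemSstar (shear g)) :
    ∀ α : ℝ, α ∈ Ioc (0:ℝ) 1 →
      ∀ z : EuclideanSpace ℂ (Fin 2), z ∈ ball (0 : EuclideanSpace ℂ (Fin 2)) 1 →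
        ‖z 0 + g (z 1) - (1 / (α:ℂ)) * g ((α:ℂ) * z 1)‖ ^ 2 + ‖z 1‖ ^ 2 < 1 / α ^ 2 := by
  intro α hα z hz
  obtain ⟨hα0, hα1⟩ := hα
  have hαC : (α:ℂ) ≠ 0 := by exact_mod_cast hα0.ne'
  have hmem : shear g z ∈ shear g '' ball 0 1 := ⟨z, hz, rfl⟩
  obtain ⟨w, hw, hweq⟩ := hstar.2 _ hmem α ⟨hα0.le, hα1⟩
  have h1 : w 1 = (α:ℂ) * z 1 := by
    have := congrArg (fun v : EuclideanSpace ℂ (Fin 2) => v 1) hweq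
    simpa [shear, Complex.real_smul] using this
  have h0 : w 0 + g (w 1) = (α:ℂ) * z 0 + (α:ℂ) * g (z 1) := by
    have := congrArg (fun v : EuclideanSpace ℂ (Fin 2) => v 0) hweq
    simpa [shear, Complex.real_smul] using this
  have hw0 : w 0 = (α:ℂ) * (z 0 + g (z 1) - (1/(α:ℂ)) * g ((α:ℂ) * z 1)) := by
    rw [h1] at h0
    field_simp
    linear_combination h0
  have hwn : ‖w‖ < 1 := by simpa using mem_ball_zero_iff.mp hw
  have hsum : ‖w 0‖ ^ 2 + ‖w 1‖ ^ 2 < 1 := by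
    have h := EuclideanSpace.norm_eq w
    rw [Fin.sum_univ_two] at h
    nlinarith [norm_nonneg w, Real.sq_sqrt (by positivity : (0:ℝ) ≤ ‖w 0‖^2 + ‖w 1‖^2),
      Real.sqrt_nonneg (‖w 0‖^2 + ‖w 1‖^2)]
  have e0 : ‖w 0‖ = α * ‖z 0 + g (z 1) - (1/(α:ℂ)) * g ((α:ℂ) * z 1)‖ := by
    rw [hw0, norm_mul, Complex.norm_real, Real.norm_of_nonneg hα0.le]
  have e1 : ‖w 1‖ = α * ‖z 1‖ := by
    rw [h1, norm_mul, Complex.norm_real, Real.norm_of_nonneg hα0.le]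
  rw [e0, e1] at hsum
  rw [lt_div_iff₀ (by positivity : (0:ℝ) < α ^ 2)]
  nlinarith [hsum]
end
end

section
/- Let g : 𝔻 → ℂ be holomorphic with g(0) = g′(0) = 0 and let f : 𝔹² → ℂ² be the shearing map f(z₁, z₂) = (z₁ + g(z₂), z₂). If f ∈ S*(𝔹²) (i.e., f(𝔹²) is starlike with respect to the origin), then g is bounded on 𝔻. -/
open Metric Set Filter
open scoped InnerProductSpace

noncomputable section

/-- If the shearing map of `g` is starlike, then `g` is bounded on `𝔻`. -/
theorem statement10 (g : ℂ → ℂ) (hg : DifferentiableOn ℂ g (ball 0 1))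
    (hg0 : g 0 = 0) (hg0' : deriv g 0 = 0) (hstar : MemSstar (shear g)) :
    ∃ M : ℝ, ∀ ζ ∈ ball (0:ℂ) 1, ‖g ζ‖ ≤ M := by
  obtain ⟨C, hC⟩ := (isCompact_closedBall (0:ℂ) (1/2)).exists_bound_of_continuousOn
    (hg.continuousOn.mono (closedBall_subset_ball (by norm_num)))
  refine ⟨2 * C + 2, fun ζ hζ => ?_⟩
  have hζ1 : ‖ζ‖ < 1 := mem_ball_zero_iff.mp hζ
  have hz : (WithLp.toLp 2 ![0, ζ] : EuclideanSpace ℂ (Fin 2)) ∈ ball (0 : EuclideanSpace ℂ (Fin 2)) 1 := by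
    refine mem_ball_zero_iff.mpr ?_
    rw [EuclideanSpace.norm_eq, Fin.sum_univ_two]
    simpa [Real.sqrt_sq (norm_nonneg ζ)] using hζ1
  have hw : shear g (WithLp.toLp 2 ![0, ζ]) ∈ shear g '' ball 0 1 := ⟨_, hz, rfl⟩
  obtain ⟨z', hz', hez⟩ := hstar.2 _ hw (1/2) ⟨by norm_num, by norm_num⟩
  have h1 : z' 1 = ζ / 2 := by
    have := congrArg (fun v => v 1) hez
    simp only [shear, PiLp.toLp_apply, Matrix.cons_val_one, Matrix.cons_val_zero, Matrix.head_cons, PiLp.smul_apply,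
      Complex.real_smul] at this
    rw [this]; push_cast; ring
  have h0 : z' 0 + g (ζ / 2) = g ζ / 2 := by
    have := congrArg (fun v => v 0) hez
    simp only [shear, PiLp.toLp_apply, Matrix.cons_val_zero, Matrix.cons_val_one, Matrix.head_cons,
      PiLp.smul_apply, Complex.real_smul, h1] at this
    rw [this]; push_cast; ring
  have hn0 : ‖z' 0‖ ≤ ‖z'‖ := by
    rw [EuclideanSpace.norm_eq, Fin.sum_univ_two, Real.le_sqrt (norm_nonneg _) (by positivity)]
    nlinarith [sq_nonneg ‖z' 1‖]
  have hn1 : ‖z' 0‖ < 1 := hn0.trans_lt (mem_ball_zero_iff.mp hz')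
  have hC2 : ‖g (ζ / 2)‖ ≤ C := by
    refine hC _ (mem_closedBall_zero_iff.mpr ?_)
    rw [norm_div]
    simp only [Complex.norm_ofNat]
    linarith
  have : g ζ = 2 * (z' 0) + 2 * g (ζ / 2) := by
    linear_combination -2 * h0
  rw [this]
  calc ‖2 * z' 0 + 2 * g (ζ / 2)‖ ≤ ‖2 * z' 0‖ + ‖2 * g (ζ / 2)‖ := norm_add_le _ _
    _ ≤ 2 * 1 + 2 * C := by
        rw [norm_mul, norm_mul]
        simp only [Complex.norm_ofNat]
        gcongr
    _ ≤ 2 * C + 2 := by linarith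
end
end

section
/- Let g(ζ) = Σ_{k=2}^∞ a_k ζ^k be holomorphic on 𝔻 with Σ_{k=2}^∞ k·|a_k| < ∞, and let f : 𝔹² → ℂ² be the shearing map f(z₁, z₂) = (z₁ + g(z₂), z₂). Then f is starshapelike: there exists a biholomorphic automorphism ψ of ℂ² such that ψ(f(𝔹²)) is a starlike domain with respect to the origin. -/
open Metric Set Filter
open scoped InnerProductSpace

noncomputable section

private lemma aux_tsub_pow (t : ℝ) (ht0 : 0 ≤ t) (ht1 : t ≤ 1) (m : ℕ) :
    t - t ^ m ≤ m * (1 - t) := by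
  induction m with
  | zero => simp; linarith
  | succ n ih =>
    have h1 : t ^ n ≤ 1 := pow_le_one₀ ht0 ht1
    have h2 : 0 ≤ t ^ n := pow_nonneg ht0 n
    rw [pow_succ]
    push_cast
    nlinarith

private lemma diff_pair (F : EuclideanSpace ℂ (Fin 2) → EuclideanSpace ℂ (Fin 2))
    (f₁ f₂ : EuclideanSpace ℂ (Fin 2) → ℂ)
    (hF : ∀ z i, F z i = ![f₁ z, f₂ z] i)
    (h1 : Differentiable ℂ f₁) (h2 : Differentiable ℂ f₂) :
    Differentiable ℂ F := by
  have heq : F = fun z => f₁ z • EuclideanSpace.single (0 : Fin 2) (1:ℂ)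
      + f₂ z • EuclideanSpace.single (1 : Fin 2) (1:ℂ) := by
    funext z
    ext i
    rw [hF]
    fin_cases i <;>
      simp [EuclideanSpace.single_apply, PiLp.add_apply, PiLp.smul_apply]
  rw [heq]
  exact (h1.smul_const _).add (h2.smul_const _)

private lemma diff_coord (i : Fin 2) :
    Differentiable ℂ (fun z : EuclideanSpace ℂ (Fin 2) => z i) :=
  (EuclideanSpace.proj (𝕜 := ℂ) (ι := Fin 2) i).differentiable

private lemma tail_starlike (b : ℕ → ℂ) (N : ℕ) (hN2 : 2 ≤ N) (q : ℂ → ℂ)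
    (hq : ∀ ζ : ℂ, ‖ζ‖ < 1 → HasSum (fun k : ℕ => b (k + N) * ζ ^ (k + N)) (q ζ))
    (hsumN : Summable fun k : ℕ => ((k + N : ℕ) : ℝ) * ‖b (k + N)‖)
    (hMle : (∑' k : ℕ, ((k + N : ℕ) : ℝ) * ‖b (k + N)‖) ≤ 1) :
    ∀ w ∈ shear q '' ball 0 1, ∀ t : ℝ, t ∈ Icc (0:ℝ) 1 →
      t • w ∈ shear q '' ball 0 1 := by
  rintro w ⟨z, hz, rfl⟩ t ⟨ht0, ht1⟩
  rw [mem_ball_zero_iff] at hz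
  set ζ : ℂ := z 1 with hζdef
  have hζle : ‖ζ‖ ≤ ‖z‖ := by
    have h := Real.sqrt_le_sqrt
      (show ‖z 1‖ ^ 2 ≤ ‖z 0‖ ^ 2 + ‖z 1‖ ^ 2 by nlinarith [sq_nonneg ‖z 0‖])
    rw [Real.sqrt_sq (norm_nonneg _)] at h
    rw [EuclideanSpace.norm_eq z, Fin.sum_univ_two]
    exact h
  have hζ1 : ‖ζ‖ < 1 := lt_of_le_of_lt hζle hz
  have htζ : ‖(t : ℂ) * ζ‖ < 1 := by
    rw [norm_mul, Complex.norm_real]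
    calc ‖t‖ * ‖ζ‖ ≤ 1 * ‖ζ‖ := by
          apply mul_le_mul_of_nonneg_right _ (norm_nonneg _)
          rw [Real.norm_eq_abs, abs_of_nonneg ht0]; exact ht1
      _ < 1 := by simpa
  set δ : ℂ := (t : ℂ) * q ζ - q ((t : ℂ) * ζ) with hδdef
  -- bound on δ
  have hδbound : ‖δ‖ ≤ (1 - t) * ‖ζ‖ ^ 2 := by
    have hA := (hq ζ hζ1).mul_left (t : ℂ)
    have hB := hq ((t : ℂ) * ζ) htζ
    have hC := hA.sub hB
    have hterm : ∀ k : ℕ,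
        ‖(t : ℂ) * (b (k + N) * ζ ^ (k + N)) - b (k + N) * ((t : ℂ) * ζ) ^ (k + N)‖
          ≤ (((k + N : ℕ) : ℝ) * ‖b (k + N)‖) * ((1 - t) * ‖ζ‖ ^ 2) := by
      intro k
      set m := k + N with hm
      have hm2 : 2 ≤ m := le_trans hN2 (Nat.le_add_left N k)
      have hfac : (t : ℂ) * (b m * ζ ^ m) - b m * ((t : ℂ) * ζ) ^ m
          = b m * ζ ^ m * ((t : ℂ) - (t : ℂ) ^ m) := by ring
      rw [hfac, norm_mul, norm_mul, norm_pow]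
      have h4 : 0 ≤ t - t ^ m := by
        have : t ^ m ≤ t ^ 1 := pow_le_pow_of_le_one ht0 ht1 (by omega)
        simpa using this
      have h1 : ‖(t : ℂ) - (t : ℂ) ^ m‖ = t - t ^ m := by
        rw [show (t : ℂ) - (t : ℂ) ^ m = ((t - t ^ m : ℝ) : ℂ) by push_cast; ring,
          Complex.norm_real, Real.norm_eq_abs, abs_of_nonneg h4]
      rw [h1]
      have h2 : t - t ^ m ≤ (m : ℝ) * (1 - t) := aux_tsub_pow t ht0 ht1 m
      have h3 : ‖ζ‖ ^ m ≤ ‖ζ‖ ^ 2 := pow_le_pow_of_le_one (norm_nonneg _) hζ1.le hm2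
      have h5 : (0:ℝ) ≤ ‖b m‖ := norm_nonneg _
      have h6 : (0:ℝ) ≤ ‖ζ‖ ^ 2 := sq_nonneg _
      have h7 : (0:ℝ) ≤ ‖ζ‖ ^ m := pow_nonneg (norm_nonneg _) m
      have h8 : (0:ℝ) ≤ (m : ℝ) * (1 - t) := le_trans h4 h2
      nlinarith [mul_le_mul h3 h2 h4 h6]
    have hu : Summable fun k : ℕ => (((k + N : ℕ) : ℝ) * ‖b (k + N)‖) * ((1 - t) * ‖ζ‖ ^ 2) :=
      hsumN.mul_right _
    have hnorms : Summable fun k : ℕ =>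
        ‖(t : ℂ) * (b (k + N) * ζ ^ (k + N)) - b (k + N) * ((t : ℂ) * ζ) ^ (k + N)‖ :=
      Summable.of_nonneg_of_le (fun k => norm_nonneg _) hterm hu
    calc ‖δ‖ = ‖∑' k : ℕ, ((t : ℂ) * (b (k + N) * ζ ^ (k + N))
            - b (k + N) * ((t : ℂ) * ζ) ^ (k + N))‖ := by rw [hC.tsum_eq]
      _ ≤ ∑' k : ℕ, ‖(t : ℂ) * (b (k + N) * ζ ^ (k + N))
            - b (k + N) * ((t : ℂ) * ζ) ^ (k + N)‖ := norm_tsum_le_tsum_norm hnorms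
      _ ≤ ∑' k : ℕ, (((k + N : ℕ) : ℝ) * ‖b (k + N)‖) * ((1 - t) * ‖ζ‖ ^ 2) :=
          Summable.tsum_le_tsum hterm hnorms hu
      _ = (∑' k : ℕ, ((k + N : ℕ) : ℝ) * ‖b (k + N)‖) * ((1 - t) * ‖ζ‖ ^ 2) :=
          tsum_mul_right
      _ ≤ 1 * ((1 - t) * ‖ζ‖ ^ 2) := by
          apply mul_le_mul_of_nonneg_right hMle
          have : (0:ℝ) ≤ 1 - t := by linarith
          positivity
      _ = (1 - t) * ‖ζ‖ ^ 2 := one_mul _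
  -- the preimage point
  set z' : EuclideanSpace ℂ (Fin 2) := WithLp.toLp 2 ![(t : ℂ) * z 0 + δ, (t : ℂ) * ζ] with hz'def
  set v : EuclideanSpace ℂ (Fin 2) := WithLp.toLp 2 ![δ, 0] with hvdef
  have hz'dec : z' = t • z + v := by
    ext i
    fin_cases i <;>
      simp [hz'def, hvdef, PiLp.add_apply, PiLp.smul_apply, Complex.real_smul, hζdef] <;> ring
  have hvnorm : ‖v‖ = ‖δ‖ := by
    rw [EuclideanSpace.norm_eq, Fin.sum_univ_two]
    simp [hvdef, Real.sqrt_sq (norm_nonneg δ)]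
  have hz'ball : ‖z'‖ < 1 := by
    have h1 : ‖z'‖ ≤ t * ‖z‖ + ‖δ‖ := by
      rw [hz'dec]
      calc ‖t • z + v‖ ≤ ‖t • z‖ + ‖v‖ := norm_add_le _ _
        _ = t * ‖z‖ + ‖δ‖ := by
            rw [norm_smul, hvnorm, Real.norm_eq_abs, abs_of_nonneg ht0]
    have hs0 : (0:ℝ) ≤ ‖z‖ := norm_nonneg _
    have hζ0 : (0:ℝ) ≤ ‖ζ‖ := norm_nonneg _
    have ht1' : (0:ℝ) ≤ 1 - t := by linarith
    nlinarith [hδbound, mul_le_mul hζle hζle hζ0 hs0,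
      mul_le_mul_of_nonneg_left (mul_le_mul hζle hζle hζ0 hs0) ht1',
      mul_le_mul_of_nonneg_left hz.le hs0, mul_nonneg ht1' (sq_nonneg ‖ζ‖)]
  refine ⟨z', mem_ball_zero_iff.mpr hz'ball, ?_⟩
  ext i
  fin_cases i <;>
    simp [shear, hz'def, PiLp.smul_apply, Complex.real_smul, hδdef, hζdef] <;> ring

set_option maxHeartbeats 1000000 in
/-- If `g(ζ) = Σ_{k≥2} a_k ζ^k` on `𝔻` with `Σ k|a_k| < ∞`, then the shearing map is
starshapelike: some automorphism `ψ` of `ℂ²` maps its image onto a starlike domain. -/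
theorem statement11 (a : ℕ → ℂ) (g : ℂ → ℂ) (ha0 : a 0 = 0) (ha1 : a 1 = 0)
    (hg : ∀ ζ ∈ ball (0:ℂ) 1, HasSum (fun k : ℕ => a k * ζ ^ k) (g ζ))
    (hsum : Summable fun k : ℕ => (k : ℝ) * ‖a k‖) :
    ∃ ψ : EuclideanSpace ℂ (Fin 2) → EuclideanSpace ℂ (Fin 2),
      IsAutomorphismCn ψ ∧
      ∀ w ∈ ψ '' (shear g '' ball 0 1), ∀ t : ℝ, t ∈ Icc (0:ℝ) 1 →
        t • w ∈ ψ '' (shear g '' ball 0 1) := by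

  classical
  obtain ⟨N, hMle, hN2⟩ :
      ∃ N : ℕ, (∑' k : ℕ, ((k + N : ℕ) : ℝ) * ‖a (k + N)‖) ≤ 1 ∧ 2 ≤ N := by
    have h := tendsto_sum_nat_add (fun k : ℕ => (k : ℝ) * ‖a k‖)
    have h2 : ∀ᶠ N in atTop, (∑' k : ℕ, ((k + N : ℕ) : ℝ) * ‖a (k + N)‖) ≤ 1 := by
      simpa using h.eventually_le_const (by norm_num : (0:ℝ) < 1)
    exact (h2.and (eventually_ge_atTop 2)).exists
  have hsumN : Summable fun k : ℕ => ((k + N : ℕ) : ℝ) * ‖a (k + N)‖ :=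
    (summable_nat_add_iff N).mpr hsum
  have hq : ∀ ζ : ℂ, ‖ζ‖ < 1 → HasSum (fun k : ℕ => a (k + N) * ζ ^ (k + N))
      (g ζ - ∑ i ∈ Finset.range N, a i * ζ ^ i) := by
    intro ζ hζ
    exact (hasSum_nat_add_iff' N).mpr (hg ζ (mem_ball_zero_iff.mpr hζ))
  have hPdiff : Differentiable ℂ (fun ζ : ℂ => ∑ i ∈ Finset.range N, a i * ζ ^ i) := by
    apply Differentiable.fun_sum
    intro i _
    exact (differentiable_pow i).const_mul (a i)
  refine ⟨shearInv (fun ζ => ∑ i ∈ Finset.range N, a i * ζ ^ i),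
    ⟨?_, shear (fun ζ => ∑ i ∈ Finset.range N, a i * ζ ^ i), ?_, ?_, ?_⟩, ?_⟩
  · refine diff_pair _ (fun z => z 0 - ∑ i ∈ Finset.range N, a i * (z 1) ^ i) (fun z => z 1)
      (fun z i => by rfl) ?_ (diff_coord 1)
    exact (diff_coord 0).sub (hPdiff.comp (diff_coord 1))
  · refine diff_pair _ (fun z => z 0 + ∑ i ∈ Finset.range N, a i * (z 1) ^ i) (fun z => z 1)
      (fun z i => by rfl) ?_ (diff_coord 1)
    exact (diff_coord 0).add (hPdiff.comp (diff_coord 1))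
  · intro z
    ext i
    fin_cases i <;> simp [shear, shearInv]
  · intro z
    ext i
    fin_cases i <;> simp [shear, shearInv]
  · have hset : shearInv (fun ζ => ∑ i ∈ Finset.range N, a i * ζ ^ i) '' (shear g '' ball 0 1)
        = shear (fun ζ => g ζ - ∑ i ∈ Finset.range N, a i * ζ ^ i) '' ball 0 1 := by
      rw [← Set.image_comp]
      apply Set.image_congr
      intro z _
      ext i
      fin_cases i <;> simp [shear, shearInv] <;> ring
    rw [hset]
    exact tail_starlike a N hN2 _ hq hsumN hMle
end
end

section
/- Let g(ζ) = Σ_{k=2}^∞ a_k ζ^k be holomorphic on 𝔻 and let f(z₁, z₂) = (z₁ + g(z₂), z₂) be the associated shearing map on 𝔹². Then for every z = (z₁, z₂) ∈ 𝔹² with z ≠ 0 where the series converge appropriately, Re⟨[df(z)]⁻¹ f(z), z⟩ = ‖z‖² + Re Σ_{k=2}^∞ (1−k)·a_k·z₂^k·conj(z₁); and if Σ_{k=2}^∞ (k−1)|a_k| ≤ 3√3/2, then Re⟨[df(z)]⁻¹ f(z), z⟩ ≥ ‖z‖² − (2/(3√3))·‖z‖²·Σ_{k=2}^∞ (k−1)|a_k|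 ≥ 0 for all z ∈ 𝔹² ∖ {0}. -/
open Metric Set Filter
open scoped InnerProductSpace

noncomputable section

/-- `[df(z)]⁻¹ f(z) = (z₁ + g(z₂) - g'(z₂) z₂, z₂)` for the shearing map `f` of `g`. -/
def shearStarlikeVec (g : ℂ → ℂ) (z : EuclideanSpace ℂ (Fin 2)) :
    EuclideanSpace ℂ (Fin 2) :=
  WithLp.toLp 2 ![z 0 + g (z 1) - deriv g (z 1) * z 1, z 1]

lemma key_ineq (x y : ℝ) (hx : 0 ≤ x) (hy : 0 ≤ y) (h : x ^ 2 + y ^ 2 ≤ 1) :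
    3 * Real.sqrt 3 * (x * y ^ 2) ≤ 2 * (x ^ 2 + y ^ 2) := by
  have hs : Real.sqrt 3 ^ 2 = 3 := Real.sq_sqrt (by norm_num)
  have hs0 : 0 ≤ Real.sqrt 3 := Real.sqrt_nonneg 3
  have h1 : (3 * Real.sqrt 3 * (x * y ^ 2)) ^ 2 ≤ (2 * (x ^ 2 + y ^ 2)) ^ 2 := by
    nlinarith [mul_nonneg (sq_nonneg (y ^ 2 - 2 * x ^ 2)) (show (0:ℝ) ≤ x ^ 2 + 4 * y ^ 2 by positivity),
      mul_nonneg (sub_nonneg.2 h) (sq_nonneg (x ^ 2 + y ^ 2))]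
  have l0 : 0 ≤ 3 * Real.sqrt 3 * (x * y ^ 2) := by positivity
  have r0 : 0 ≤ 2 * (x ^ 2 + y ^ 2) := by positivity
  calc 3 * Real.sqrt 3 * (x * y ^ 2) = Real.sqrt ((3 * Real.sqrt 3 * (x * y ^ 2)) ^ 2) :=
        (Real.sqrt_sq l0).symm
    _ ≤ Real.sqrt ((2 * (x ^ 2 + y ^ 2)) ^ 2) := Real.sqrt_le_sqrt h1
    _ = 2 * (x ^ 2 + y ^ 2) := Real.sqrt_sq r0

/-- For the shearing map `f` of `g(ζ) = Σ_{k≥2} a_k ζ^k`, one has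
`Re⟨[df(z)]⁻¹ f(z), z⟩ = ‖z‖² + Re Σ_{k≥2} (1-k) a_k z₂^k conj(z₁)` on `𝔹² \ {0}`, and if
`Σ (k-1)|a_k| ≤ 3√3/2` then
`Re⟨[df(z)]⁻¹ f(z), z⟩ ≥ ‖z‖² - (2/(3√3)) ‖z‖² Σ (k-1)|a_k| ≥ 0`. -/
theorem statement14 (a : ℕ → ℂ) (g : ℂ → ℂ) (ha0 : a 0 = 0) (ha1 : a 1 = 0)
    (hD : DifferentiableOn ℂ g (ball 0 1))
    (hg : ∀ ζ ∈ ball (0:ℂ) 1, HasSum (fun k : ℕ => a k * ζ ^ k) (g ζ))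
    (hsum : Summable fun k : ℕ => ((k : ℝ) - 1) * ‖a k‖) :
    ∀ z : EuclideanSpace ℂ (Fin 2), z ∈ ball (0 : EuclideanSpace ℂ (Fin 2)) 1 → z ≠ 0 →
      (⟪z, shearStarlikeVec g z⟫_ℂ).re
          = ‖z‖ ^ 2
            + (∑' k : ℕ, (1 - (k:ℂ)) * a k * (z 1) ^ k * (starRingEnd ℂ) (z 0)).re ∧
      ((∑' k : ℕ, ((k : ℝ) - 1) * ‖a k‖) ≤ 3 * Real.sqrt 3 / 2 →
        ‖z‖ ^ 2 - 2 / (3 * Real.sqrt 3) * ‖z‖ ^ 2 * (∑' k : ℕ, ((k : ℝ) - 1) * ‖a k‖)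
            ≤ (⟪z, shearStarlikeVec g z⟫_ℂ).re ∧
        0 ≤ ‖z‖ ^ 2 - 2 / (3 * Real.sqrt 3) * ‖z‖ ^ 2
              * (∑' k : ℕ, ((k : ℝ) - 1) * ‖a k‖)) := by
  have hs3 : (0:ℝ) < Real.sqrt 3 := Real.sqrt_pos.2 (by norm_num)
  -- summability facts
  have hsa : Summable fun k : ℕ => ‖a k‖ := by
    refine Summable.of_nonneg_of_le (fun k => norm_nonneg _) (fun k => ?_) hsum
    match k with
    | 0 => simp [ha0]
    | 1 => simp [ha1]
    | (n + 2) =>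
      have : (1:ℝ) ≤ ((n + 2 : ℕ) : ℝ) - 1 := by push_cast; linarith
      nlinarith [norm_nonneg (a (n + 2))]
  have hka : Summable fun k : ℕ => (k : ℝ) * ‖a k‖ := by
    have : (fun k : ℕ => (k : ℝ) * ‖a k‖)
        = fun k : ℕ => ((k : ℝ) - 1) * ‖a k‖ + ‖a k‖ := by funext k; ring
    rw [this]; exact hsum.add hsa
  have hSnn : 0 ≤ ∑' k : ℕ, ((k : ℝ) - 1) * ‖a k‖ := by
    refine tsum_nonneg fun k => ?_
    match k with
    | 0 => simp [ha0]
    | (n + 1) =>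
      have : (0:ℝ) ≤ ((n + 1 : ℕ) : ℝ) - 1 := by push_cast; linarith
      positivity
  -- derivative of the sum
  set u : ℂ → ℂ := fun ζ => ∑' k : ℕ, a k * ζ ^ k with hu
  have hgu : EqOn g u (ball 0 1) := fun ζ hζ => ((hg ζ hζ).tsum_eq).symm
  have hderiv : ∀ ζ ∈ ball (0:ℂ) 1,
      HasDerivAt u (∑' k : ℕ, (k : ℂ) * a k * ζ ^ (k - 1)) ζ := by
    intro ζ hζ
    rw [hu]
    refine hasDerivAt_tsum_of_isPreconnected (𝕜 := ℂ) (F := ℂ)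
      (g := fun k ζ => a k * ζ ^ k) (g' := fun k ζ => (k : ℂ) * a k * ζ ^ (k - 1)) hka isOpen_ball
      (convex_ball (0:ℂ) 1).isPreconnected (fun n y _ => ?_) (fun n y hy => ?_)
      (mem_ball_self one_pos) ?_ hζ
    · have := (hasDerivAt_pow n y).const_mul (a n)
      exact this.congr_deriv (by ring)
    · have hy1 : ‖y‖ < 1 := by simpa using hy
      calc ‖(n : ℂ) * a n * y ^ (n - 1)‖ = (n : ℝ) * ‖a n‖ * ‖y‖ ^ (n - 1) := by
            simp [norm_mul, norm_pow]
        _ ≤ (n : ℝ) * ‖a n‖ * 1 := by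
            refine mul_le_mul_of_nonneg_left ?_ (by positivity)
            exact pow_le_one₀ (norm_nonneg _) hy1.le
        _ = (n : ℝ) * ‖a n‖ := mul_one _
    · exact (hg 0 (mem_ball_self one_pos)).summable
  intro z hz hz0
  set ζ := z 1 with hζdef
  have hzlt : ‖z‖ < 1 := by simpa using hz
  have hnz : ‖z‖ ^ 2 = ‖z 0‖ ^ 2 + ‖z 1‖ ^ 2 := by
    rw [EuclideanSpace.norm_eq, Real.sq_sqrt (by positivity)]
    simp [Fin.sum_univ_two]
  have hζball : ζ ∈ ball (0:ℂ) 1 := by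
    rw [mem_ball_zero_iff]
    have : ‖z 1‖ ^ 2 ≤ ‖z‖ ^ 2 := by nlinarith [sq_nonneg ‖z 0‖]
    nlinarith [norm_nonneg (z 1), norm_nonneg z]
  have hd : HasDerivAt g (∑' k : ℕ, (k : ℂ) * a k * ζ ^ (k - 1)) ζ := by
    refine (hderiv ζ hζball).congr_of_eventuallyEq ?_
    filter_upwards [isOpen_ball.mem_nhds hζball] with y hy using hgu hy
  have hdg : deriv g ζ = ∑' k : ℕ, (k : ℂ) * a k * ζ ^ (k - 1) := hd.deriv
  have hS1 : Summable fun k : ℕ => a k * ζ ^ k := (hg ζ hζball).summable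
  have hζ1 : ‖ζ‖ < 1 := by simpa using hζball
  have hS2 : Summable fun k : ℕ => (k : ℂ) * a k * ζ ^ k := by
    refine Summable.of_norm_bounded hka fun k => ?_
    calc ‖(k : ℂ) * a k * ζ ^ k‖ = (k : ℝ) * ‖a k‖ * ‖ζ‖ ^ k := by simp [norm_mul, norm_pow]
      _ ≤ (k : ℝ) * ‖a k‖ * 1 := by
          refine mul_le_mul_of_nonneg_left ?_ (by positivity)
          exact pow_le_one₀ (norm_nonneg _) hζ1.le
      _ = (k : ℝ) * ‖a k‖ := mul_one _
  have hw : g ζ - deriv g ζ * ζ = ∑' k : ℕ, (1 - (k : ℂ)) * a k * ζ ^ k := by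
    rw [hgu hζball, hdg]
    have e1 : (∑' k : ℕ, (k : ℂ) * a k * ζ ^ (k - 1)) * ζ
        = ∑' k : ℕ, (k : ℂ) * a k * ζ ^ k := by
      rw [← tsum_mul_right]
      refine tsum_congr fun k => ?_
      match k with
      | 0 => simp
      | (n + 1) => simp [pow_succ]; ring
    rw [hu, e1, ← Summable.tsum_sub hS1 hS2]
    exact tsum_congr fun k => by ring
  -- inner product identity
  have hinner : ⟪z, shearStarlikeVec g z⟫_ℂ
      = ((‖z‖ : ℂ)) ^ 2 + ∑' k : ℕ, (1 - (k : ℂ)) * a k * ζ ^ k * (starRingEnd ℂ) (z 0) := by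
    have hself : (starRingEnd ℂ) (z 0) * z 0 + (starRingEnd ℂ) (z 1) * z 1 = ((‖z‖ : ℂ)) ^ 2 := by
      have := inner_self_eq_norm_sq_to_K (𝕜 := ℂ) z
      rw [PiLp.inner_apply, Fin.sum_univ_two] at this
      simpa [RCLike.inner_apply, Complex.conj_mul'] using this
    have hmul : (starRingEnd ℂ) (z 0) * (∑' k : ℕ, (1 - (k : ℂ)) * a k * ζ ^ k)
        = ∑' k : ℕ, (1 - (k : ℂ)) * a k * ζ ^ k * (starRingEnd ℂ) (z 0) := by
      rw [← tsum_mul_left]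
      exact tsum_congr fun k => by ring
    rw [PiLp.inner_apply, Fin.sum_univ_two]
    simp only [shearStarlikeVec, RCLike.inner_apply, Matrix.cons_val_zero, Matrix.cons_val_one,
      Matrix.head_cons]
    rw [← hζdef, mul_comm (z 0 + g ζ - deriv g ζ * ζ), mul_comm ζ]
    calc (starRingEnd ℂ) (z 0) * (z 0 + g ζ - deriv g ζ * ζ) + (starRingEnd ℂ) ζ * ζ
        = ((starRingEnd ℂ) (z 0) * z 0 + (starRingEnd ℂ) (z 1) * z 1)
            + (starRingEnd ℂ) (z 0) * (g ζ - deriv g ζ * ζ) := by rw [hζdef]; ring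
      _ = ((‖z‖ : ℂ)) ^ 2 + ∑' k : ℕ, (1 - (k : ℂ)) * a k * ζ ^ k * (starRingEnd ℂ) (z 0) := by
          rw [hself, hw, hmul]
  have hre : (⟪z, shearStarlikeVec g z⟫_ℂ).re
      = ‖z‖ ^ 2 + (∑' k : ℕ, (1 - (k : ℂ)) * a k * (z 1) ^ k * (starRingEnd ℂ) (z 0)).re := by
    rw [hinner, ← hζdef]
    simp [Complex.add_re, ← Complex.ofReal_pow]
  refine ⟨hre, fun hSle => ?_⟩
  -- the norm bound for the tail
  set C : ℝ := 2 / (3 * Real.sqrt 3) * ‖z‖ ^ 2 with hC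
  have hCnn : 0 ≤ C := by positivity
  have hterm : ∀ k : ℕ, ‖(1 - (k : ℂ)) * a k * ζ ^ k * (starRingEnd ℂ) (z 0)‖
      ≤ ((k : ℝ) - 1) * ‖a k‖ * C := by
    intro k
    match k with
    | 0 => simp [ha0]
    | 1 => simp [ha1]
    | (n + 2) =>
      set m : ℕ := n + 2
      have hm1 : (1:ℝ) ≤ (m : ℝ) - 1 := by simp [m]; push_cast; linarith
      have h1k : ‖(1 : ℂ) - (m : ℂ)‖ = (m : ℝ) - 1 := by
        have : (1 : ℂ) - (m : ℂ) = ((1 - (m:ℝ) : ℝ) : ℂ) := by push_cast; ring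
        rw [this, Complex.norm_real, Real.norm_eq_abs, abs_of_nonpos (by linarith)]
        ring
      have hxy : ‖ζ‖ ^ m * ‖z 0‖ ≤ C := by
        have h2 : ‖ζ‖ ^ m ≤ ‖ζ‖ ^ 2 :=
          pow_le_pow_of_le_one (norm_nonneg _) hζ1.le (by simp [m])
        have h3 : ‖z 0‖ * ‖ζ‖ ^ 2 ≤ C := by
          have := key_ineq ‖z 0‖ ‖z 1‖ (norm_nonneg _) (norm_nonneg _)
            (by rw [← hnz]; nlinarith [norm_nonneg z])
          rw [hC, hnz, ← hζdef] at *
          rw [div_mul_eq_mul_div, le_div_iff₀ (by positivity)]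
          nlinarith
        calc ‖ζ‖ ^ m * ‖z 0‖ ≤ ‖ζ‖ ^ 2 * ‖z 0‖ :=
              mul_le_mul_of_nonneg_right h2 (norm_nonneg _)
          _ = ‖z 0‖ * ‖ζ‖ ^ 2 := by ring
          _ ≤ C := h3
      calc ‖(1 - (m : ℂ)) * a m * ζ ^ m * (starRingEnd ℂ) (z 0)‖
          = ((m : ℝ) - 1) * ‖a m‖ * (‖ζ‖ ^ m * ‖z 0‖) := by
            simp [norm_mul, norm_pow, h1k]; ring
        _ ≤ ((m : ℝ) - 1) * ‖a m‖ * C := by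
            refine mul_le_mul_of_nonneg_left hxy ?_
            have := norm_nonneg (a m); nlinarith
  have hSnorm : Summable fun k : ℕ => ‖(1 - (k : ℂ)) * a k * ζ ^ k * (starRingEnd ℂ) (z 0)‖ :=
    Summable.of_nonneg_of_le (fun k => norm_nonneg _) hterm (hsum.mul_right C)
  have hnormT : ‖∑' k : ℕ, (1 - (k : ℂ)) * a k * ζ ^ k * (starRingEnd ℂ) (z 0)‖
      ≤ (∑' k : ℕ, ((k : ℝ) - 1) * ‖a k‖) * C := by
    calc ‖∑' k : ℕ, (1 - (k : ℂ)) * a k * ζ ^ k * (starRingEnd ℂ) (z 0)‖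
        ≤ ∑' k : ℕ, ‖(1 - (k : ℂ)) * a k * ζ ^ k * (starRingEnd ℂ) (z 0)‖ :=
          norm_tsum_le_tsum_norm hSnorm
      _ ≤ ∑' k : ℕ, ((k : ℝ) - 1) * ‖a k‖ * C :=
          Summable.tsum_le_tsum hterm hSnorm (hsum.mul_right C)
      _ = (∑' k : ℕ, ((k : ℝ) - 1) * ‖a k‖) * C := tsum_mul_right
  set T := ∑' k : ℕ, (1 - (k : ℂ)) * a k * (z 1) ^ k * (starRingEnd ℂ) (z 0) with hT
  have hreT : -((∑' k : ℕ, ((k : ℝ) - 1) * ‖a k‖) * C) ≤ T.re := by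
    have h1 : |T.re| ≤ ‖T‖ := Complex.abs_re_le_norm T
    have h2 : -‖T‖ ≤ T.re := by
      have := neg_abs_le T.re
      linarith
    have h3 : ‖T‖ ≤ (∑' k : ℕ, ((k : ℝ) - 1) * ‖a k‖) * C := by
      rw [hT]; exact hnormT
    linarith
  constructor
  · rw [hre]
    linarith [hreT, mul_comm C (∑' k : ℕ, ((k : ℝ) - 1) * ‖a k‖)]
  · have hc : 2 / (3 * Real.sqrt 3) * (∑' k : ℕ, ((k : ℝ) - 1) * ‖a k‖) ≤ 1 := by
      rw [div_mul_eq_mul_div, div_le_one (by positivity)]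
      linarith [hSle]
    have h4 : ‖z‖ ^ 2 * (2 / (3 * Real.sqrt 3) * (∑' k : ℕ, ((k : ℝ) - 1) * ‖a k‖))
        ≤ ‖z‖ ^ 2 * 1 := mul_le_mul_of_nonneg_left hc (sq_nonneg ‖z‖)
    rw [hC]
    nlinarith [h4]
end
end

section
/- Let h(ζ) = exp(i/(1−ζ)³) for ζ ∈ 𝔻 and define f : 𝔹² → ℂ² by f(z₁, z₂) = (z₁ + z₂²·h(z₂), z₂). Then for every r ∈ (1/2, 1), the operator norm of the differential at (0, r) satisfies ‖df(0, r)‖ ≥ 3r²/(1−r)⁴ − (1 + 2r) ≥ 2r²/(1−r)⁴. -/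
open Metric Set Filter
open scoped InnerProductSpace

noncomputable section

/-- `h(ζ) = exp(i/(1-ζ)³)`. -/
def hFun (ζ : ℂ) : ℂ := Complex.exp (Complex.I / (1 - ζ) ^ 3)

/-- The shearing map `f(z₁,z₂) = (z₁ + z₂² h(z₂), z₂)` of the proof of the main theorem. -/
def fExample : EuclideanSpace ℂ (Fin 2) → EuclideanSpace ℂ (Fin 2) :=
  fun z => WithLp.toLp 2 ![z 0 + (z 1) ^ 2 * hFun (z 1), z 1]

lemma gDeriv (ζ : ℂ) (hζ : (1 : ℂ) - ζ ≠ 0) :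
    HasDerivAt (fun w => w ^ 2 * hFun w)
      (2 * ζ * hFun ζ + ζ ^ 2 * (hFun ζ * (3 * Complex.I / (1 - ζ) ^ 4))) ζ := by
  have h1 : HasDerivAt (fun w : ℂ => (1 - w) ^ 3) (-(3 * (1 - ζ) ^ 2)) ζ := by
    have := ((hasDerivAt_id ζ).const_sub 1).pow 3
    exact this.congr_deriv (by simp)
  have h2 : HasDerivAt (fun w : ℂ => Complex.I / (1 - w) ^ 3)
      (3 * Complex.I / (1 - ζ) ^ 4) ζ := by
    have hinv : HasDerivAt (fun w : ℂ => ((1 - w) ^ 3)⁻¹)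
        (-(-(3 * (1 - ζ) ^ 2)) / ((1 - ζ) ^ 3) ^ 2) ζ := h1.inv (pow_ne_zero 3 hζ)
    have := hinv.const_mul Complex.I
    have heq : (fun w : ℂ => Complex.I / (1 - w) ^ 3)
        = fun w : ℂ => Complex.I * ((1 - w) ^ 3)⁻¹ := by
      funext w; rw [div_eq_mul_inv]
    rw [heq]
    refine this.congr_deriv ?_
    rw [neg_neg]
    field_simp
  have h3 : HasDerivAt hFun (hFun ζ * (3 * Complex.I / (1 - ζ) ^ 4)) ζ := by
    exact h2.cexp
  have h4 : HasDerivAt (fun w : ℂ => w ^ 2) (2 * ζ) ζ := by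
    simpa using hasDerivAt_pow 2 ζ
  exact h4.mul h3

/-- For `r ∈ (1/2, 1)`: `‖df(0,r)‖ ≥ 3r²/(1-r)⁴ - (1+2r) ≥ 2r²/(1-r)⁴`. -/
theorem statement15 (r : ℝ) (hr : r ∈ Ioo (1/2 : ℝ) 1) :
    3 * r ^ 2 / (1 - r) ^ 4 - (1 + 2 * r)
        ≤ ‖fderiv ℂ fExample (WithLp.toLp 2 ![0, (r:ℂ)] : EuclideanSpace ℂ (Fin 2))‖ ∧
    2 * r ^ 2 / (1 - r) ^ 4 ≤ 3 * r ^ 2 / (1 - r) ^ 4 - (1 + 2 * r) := by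
  obtain ⟨hr1, hr2⟩ := hr
  constructor
  · have h1r : (0:ℝ) < 1 - r := by linarith
    have h4 : (0:ℝ) < (1 - r) ^ 4 := pow_pos h1r 4
    have h1c : ((1:ℂ) - r) = ((1 - r : ℝ) : ℂ) := by push_cast; ring
    have hζ : (1:ℂ) - (r:ℂ) ≠ 0 := by
      rw [h1c]
      exact Complex.ofReal_ne_zero.mpr (ne_of_gt h1r)
    set p : EuclideanSpace ℂ (Fin 2) := WithLp.toLp 2 ![0, (r:ℂ)] with hp
    set c : ℂ := 2 * (r:ℂ) * hFun r + (r:ℂ) ^ 2 * (hFun r * (3 * Complex.I / (1 - (r:ℂ)) ^ 4)) with hc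
    set w : EuclideanSpace ℂ (Fin 2) := EuclideanSpace.single 0 (1:ℂ) with hw
    have hp1 : p 1 = (r:ℂ) := by simp [hp]
    -- rewrite fExample
    have hfe : fExample = fun z : EuclideanSpace ℂ (Fin 2) =>
        z + ((EuclideanSpace.proj (𝕜 := ℂ) (1 : Fin 2)) z ^ 2
          * hFun ((EuclideanSpace.proj (𝕜 := ℂ) (1 : Fin 2)) z)) • w := by
      funext z
      ext i
      fin_cases i <;>
        simp [fExample, hw, EuclideanSpace.single_apply, EuclideanSpace.proj]
    have hg : HasDerivAt (fun ζ : ℂ => ζ ^ 2 * hFun ζ) c (p 1) := by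
      rw [hp1]; exact gDeriv r hζ
    have hproj : HasFDerivAt (fun z : EuclideanSpace ℂ (Fin 2) =>
        (EuclideanSpace.proj (𝕜 := ℂ) (1 : Fin 2)) z)
        (EuclideanSpace.proj (𝕜 := ℂ) (1 : Fin 2)) p :=
      (EuclideanSpace.proj (𝕜 := ℂ) (1 : Fin 2)).hasFDerivAt
    have hcomp : HasFDerivAt (fun z : EuclideanSpace ℂ (Fin 2) =>
        ((EuclideanSpace.proj (𝕜 := ℂ) (1 : Fin 2)) z) ^ 2
          * hFun ((EuclideanSpace.proj (𝕜 := ℂ) (1 : Fin 2)) z))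
        (c • (EuclideanSpace.proj (𝕜 := ℂ) (1 : Fin 2))) p := by
      have := hg.comp_hasFDerivAt p hproj; exact this
    have hD : HasFDerivAt fExample
        (ContinuousLinearMap.id ℂ (EuclideanSpace ℂ (Fin 2))
          + (c • (EuclideanSpace.proj (𝕜 := ℂ) (1 : Fin 2))).smulRight w) p := by
      rw [hfe]
      exact (hasFDerivAt_id p).add (hcomp.smul_const w)
    rw [hD.fderiv]
    set D := ContinuousLinearMap.id ℂ (EuclideanSpace ℂ (Fin 2))
          + (c • (EuclideanSpace.proj (𝕜 := ℂ) (1 : Fin 2))).smulRight w with hDdef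
    set v : EuclideanSpace ℂ (Fin 2) := EuclideanSpace.single 1 (1:ℂ) with hv
    have hvnorm : ‖v‖ = 1 := by simp [hv, EuclideanSpace.norm_single]
    have hDv0 : (D v) 0 = c := by
      simp [hDdef, hv, hw, EuclideanSpace.single_apply, EuclideanSpace.proj,
        ContinuousLinearMap.smulRight_apply]
    -- ‖c‖ ≤ ‖D v‖
    have hcoord : ‖(D v) 0‖ ≤ ‖D v‖ := by
      rw [EuclideanSpace.norm_eq]
      have : ‖(D v) 0‖ = Real.sqrt (‖(D v) 0‖ ^ 2) := by
        rw [Real.sqrt_sq (norm_nonneg _)]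
      rw [this]
      apply Real.sqrt_le_sqrt
      rw [Fin.sum_univ_two]
      nlinarith [sq_nonneg ‖(D v) 1‖]
    have hDvD : ‖D v‖ ≤ ‖D‖ := by
      calc ‖D v‖ ≤ ‖D‖ * ‖v‖ := D.le_opNorm v
      _ = ‖D‖ := by rw [hvnorm, mul_one]
    -- ‖c‖ ≥ 3r²/(1-r)⁴ - 2r
    have hh1 : ‖hFun (r:ℂ)‖ = 1 := by
      rw [hFun, h1c, ← Complex.ofReal_pow]
      rw [Complex.norm_exp]
      have hre : (Complex.I / (((1-r)^3 : ℝ) : ℂ)).re = 0 := by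
        rw [div_eq_mul_inv, ← Complex.ofReal_inv, Complex.mul_re, Complex.I_re,
          Complex.I_im, Complex.ofReal_re, Complex.ofReal_im]
        ring
      rw [hre, Real.exp_zero]
    have hb : ‖2 * (r:ℂ) * hFun r‖ = 2 * r := by
      rw [norm_mul, norm_mul, hh1, mul_one]
      simp [Complex.norm_real, abs_of_pos (by linarith : (0:ℝ) < r)]
    have ha : ‖(r:ℂ) ^ 2 * (hFun r * (3 * Complex.I / (1 - (r:ℂ)) ^ 4))‖
        = 3 * r ^ 2 / (1 - r) ^ 4 := by
      have h14 : ‖((1:ℂ) - r) ^ 4‖ = (1 - r) ^ 4 := by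
        rw [h1c, ← Complex.ofReal_pow, Complex.norm_real]
        exact Real.norm_of_nonneg h4.le
      have h3I : ‖(3:ℂ) * Complex.I‖ = 3 := by simp
      have hr2n : ‖(r:ℂ) ^ 2‖ = r ^ 2 := by
        rw [← Complex.ofReal_pow, Complex.norm_real]
        exact Real.norm_of_nonneg (sq_nonneg r)
      rw [norm_mul, norm_mul, hh1, one_mul, norm_div, h3I, h14, hr2n]
      ring
    have hclower : 3 * r ^ 2 / (1 - r) ^ 4 - 2 * r ≤ ‖c‖ := by
      have := norm_le_add_norm_add'
        (2 * (r:ℂ) * hFun r)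
        ((r:ℂ) ^ 2 * (hFun r * (3 * Complex.I / (1 - (r:ℂ)) ^ 4)))
      rw [ha, hb, ← hc] at this
      linarith
    rw [hDv0] at hcoord
    linarith
  · have h1r : (0:ℝ) < 1 - r := by linarith [hr1]
    have h4 : (0:ℝ) < (1 - r) ^ 4 := pow_pos h1r 4
    have hkey : (1 + 2*r) * (1-r)^4 ≤ r^2 := by
      nlinarith [sq_nonneg (1-r), sq_nonneg r, sq_nonneg (2*r-1),
        sq_nonneg ((2*r-1)*(1-r)), sq_nonneg ((2*r-1)*(1-r)^2), mul_pos h1r h4,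
        hr1, hr2]
    have hdr : (1 + 2*r) ≤ r^2/(1-r)^4 := (le_div_iff₀ h4).mpr hkey
    have h5 : 3*r^2/(1-r)^4 - 2*r^2/(1-r)^4 = r^2/(1-r)^4 := by ring
    linarith
end
end
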